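/- For 0 < R < 1, the equation 27x⁴ − 18x² − 4(R + R⁻¹)x − 1 = 0 has exactly two real solutions, one positive and one lying in (−1/3, 0); let a denote the solution in (−1/3, 0). Define b := ((3a²+1)/(2a) − sqrt(((3a²+1)/(2a))² − 4))/2 and c := (1−3a²)/(2a) + sqrt(((3a²+1)/(2a))² − 4). Then the polynomial identity w − a + R(1−aw)w² = −aR(w−b)²(w−c) holds for all w ∈ ℂ, and the inequalities −1 < 1/b < c < a < 0 hold. -/

import Mathlib

open Complex MeasureTheory Set Filter Metric Polynomial
open scoped ENNReal

noncomputable section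

/-- The open annulus `r < |w| < s` in the complex plane. -/
def annul (r s : ℝ) : Set ℂ := {w : ℂ | r < ‖w‖ ∧ ‖w‖ < s}

/-- Multiplicity (order) of a holomorphic map at a point: the least `α ≥ 1` such that the
`α`-th derivative is nonzero (so a solution `ω` of `h w = c` is *simple* iff `multOrd h ω = 1`). -/
def multOrd (h : ℂ → ℂ) (ω : ℂ) : ℕ := sInf {α : ℕ | 1 ≤ α ∧ iteratedDeriv α h ω ≠ 0}

/-- `Gset ψ r` is the set `G_r := ℂ ∖ closure (ψ '' {r < |w|})`. -/
def Gset (ψ : ℂ → ℂ) (r : ℝ) : Set ℂ := (closure (ψ '' {w : ℂ | r < ‖w‖}))ᶜ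

/-- `Lset ψ r` is the level curve `L_r := ψ '' {|w| = r}`. -/
def Lset (ψ : ℂ → ℂ) (r : ℝ) : Set ℂ := ψ '' {w : ℂ | ‖w‖ = r}

/-- The support of a measure on `ℂ`: points all of whose neighborhoods have positive measure. -/
def msupport (m : Measure ℂ) : Set ℂ := {x : ℂ | ∀ U ∈ nhds x, m U ≠ 0}

/-- The normalized zero-counting measure `ν` of a polynomial: `(1/deg q)` times the sum of
unit point masses at the roots of `q`, counted with multiplicity. -/
def zeroMeasure (q : Polynomial ℂ) : Measure ℂ :=
  ((q.natDegree : ℝ≥0∞))⁻¹ • (q.roots.map (fun z => MeasureTheory.Measure.dirac z)).sum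

/-- The setting of the paper: `L₁` is an analytic Jordan curve with interior domain `G1`
(bounded, open, connected); `psi` is the exterior conformal map of `Δ₁` onto the exterior
domain `Ω₁` (with `ψ(∞) = ∞`, `ψ'(∞) > 0`), analytically and univalently continued to
`{ρ < |w|}` with `ρ < 1` smallest possible; `phi` is a conformal map of `G1` onto the unit
disk together with its one-to-one meromorphic continuation to `G_{1/ρ}`; `hphi` (i.e. `h_φ`)
is the meromorphic continuation of `φ ∘ ψ` to the annulus `{μ < |w| < 1/ρ}` with `μ ≥ 0`
smallest possible; and `p n` are the orthonormal polynomials of `G1` with respect to the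
normalized area measure `π⁻¹ dx dy`. -/
structure CarlemanSetup where
  G1 : Set ℂ
  psi : ℂ → ℂ
  phi : ℂ → ℂ
  hphi : ℂ → ℂ
  ρ : ℝ
  μ : ℝ
  p : ℕ → Polynomial ℂ
  hρ_nonneg : 0 ≤ ρ
  hρ_lt_one : ρ < 1
  hμ_nonneg : 0 ≤ μ
  hμ_le_ρ : μ ≤ ρ
  hG1_open : IsOpen G1
  hG1_bounded : Bornology.IsBounded G1
  hG1_conn : IsConnected G1
  hψ_an : AnalyticOnNhd ℂ psi {w : ℂ | ρ < ‖w‖}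
  hψ_inj : Set.InjOn psi {w : ℂ | ρ < ‖w‖}
  hψ_image : psi '' {w : ℂ | 1 < ‖w‖} = (closure G1)ᶜ
  hψ_infty : ∃ c : ℝ, 0 < c ∧
    Filter.Tendsto (fun w => psi w / w) (Bornology.cobounded ℂ) (nhds (c : ℂ))
  hρ_min : ∀ ρ' : ℝ, 0 ≤ ρ' → ρ' < ρ →
    ¬ ∃ g : ℂ → ℂ, AnalyticOnNhd ℂ g {w : ℂ | ρ' < ‖w‖} ∧
      Set.InjOn g {w : ℂ | ρ' < ‖w‖} ∧
      Set.EqOn g psi {w : ℂ | 1 < ‖w‖}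
  hφ_an : AnalyticOnNhd ℂ phi G1
  hφ_inj : Set.InjOn phi G1
  hφ_image : phi '' G1 = Metric.ball (0 : ℂ) 1
  hφ_mero : MeromorphicOn phi (Gset psi ρ⁻¹)
  hhφ_mero : MeromorphicOn hphi (annul μ ρ⁻¹)
  hhφ_eq : Set.EqOn hphi (phi ∘ psi) {w : ℂ | ρ < ‖w‖ ∧ ‖w‖ ≤ 1}
  hμ_min : ∀ μ' : ℝ, 0 ≤ μ' → μ' < μ →
    ¬ ∃ g : ℂ → ℂ, MeromorphicOn g (annul μ' ρ⁻¹) ∧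
      Set.EqOn g (phi ∘ psi) {w : ℂ | ρ < ‖w‖ ∧ ‖w‖ ≤ 1}
  hp_deg : ∀ n : ℕ, (p n).degree = n
  hp_lead : ∀ n : ℕ, 0 < ((p n).leadingCoeff).re ∧ ((p n).leadingCoeff).im = 0
  hp_orth : ∀ n m : ℕ, (∫ z in G1, (p n).eval z * (starRingEnd ℂ) ((p m).eval z)) =
      if n = m then (Real.pi : ℂ) else 0

namespace CarlemanSetup

variable (S : CarlemanSetup)

/-- The solutions of the equation `h_φ(w) = φ(z)` lying in the annulus `μ < |w| < 1`. -/
def sols (z : ℂ) : Set ℂ :=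
  {w : ℂ | S.μ < ‖w‖ ∧ ‖w‖ < 1 ∧ S.hphi w = S.phi z}

/-- `Σ`: the set of `z ∈ G₁` for which `h_φ(w) = φ(z)` has a solution in `μ < |w| < 1`. -/
def Sig : Set ℂ := {z ∈ S.G1 | (S.sols z).Nonempty}

/-- `Σ₀ := G₁ ∖ Σ`. -/
def Sig0 : Set ℂ := S.G1 \ S.Sig

/-- The solutions of `h_φ(w) = φ(z)` in `μ < |w| < 1` of largest modulus. -/
def topSols (z : ℂ) : Set ℂ :=
  {w ∈ S.sols z | ∀ v ∈ S.sols z, ‖v‖ ≤ ‖w‖}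

/-- `Σ_q` for `q ≥ 1`: the set of `z ∈ Σ` whose solutions of largest modulus
`ω_{z,1}, …, ω_{z,s}` have total multiplicity `α_{z,1} + ⋯ + α_{z,s} = q`.
In particular `Σ₁ = SigP 1` consists of those `z` for which there is exactly one solution of
largest modulus and it is simple. -/
def SigP (q : ℕ) : Set ℂ :=
  {z ∈ S.Sig | ∃ hfin : (S.topSols z).Finite,
     (∀ w ∈ S.topSols z, 1 ≤ multOrd S.hphi w) ∧
     ∑ w ∈ hfin.toFinset, multOrd S.hphi w = q}

end CarlemanSetup

/-- For `a ∈ (−1/3, 0)`, the number `b` of the Cassini-oval example. -/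
def bval (a : ℝ) : ℝ :=
  ((3 * a ^ 2 + 1) / (2 * a) - Real.sqrt (((3 * a ^ 2 + 1) / (2 * a)) ^ 2 - 4)) / 2

/-- For `a ∈ (−1/3, 0)`, the number `c` of the Cassini-oval example. -/
def cval (a : ℝ) : ℝ :=
  (1 - 3 * a ^ 2) / (2 * a) + Real.sqrt (((3 * a ^ 2 + 1) / (2 * a)) ^ 2 - 4)

/-!
Write `K = R + R⁻¹ > 2`. The quartic equals `(3x+1)³(x-1) - 4(K-2)x`, so it is positive on
`(-∞, -1/3]`, negative on `[0, 1]`, and at `x ≠ 0` it vanishes iff `(3x+1)³(1 - x⁻¹) = 4(K-2)`,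
whose left side is a product of positive increasing factors on `(-1/3, 0)` and on `(1, ∞)`.
Hence there is exactly one root in each of these intervals.

For the root `a ∈ (-1/3, 0)`, `b = -2(R⁻¹+3a)/(1-9a²)` is a double root of
`P(w) = w - a + R(1-aw)w²` (a polynomial identity modulo the quartic), and `b < -1` with
`b + b⁻¹ = (3a²+1)/(2a)`, so `b = bval a`. Vieta gives the third root `c = a⁻¹ - 2b = cval a`.
As `-aR > 0`, the sign of `P(w) = -aR(w-b)²(w-c)` is that of `w - c`, and
`P(a) = R(1-a²)a² > 0`, `P(b⁻¹) = (a-b)(R⁻¹-R)/b³ < 0` give `b⁻¹ < c < a`.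
-/

def cassiniQuartic (K x : ℝ) : ℝ := 27 * x ^ 4 - 18 * x ^ 2 - 4 * K * x - 1

def cassiniRatio (x : ℝ) : ℝ := (3 * x + 1) ^ 3 * (1 - x⁻¹)

def cassiniCubic {𝕜 : Type*} [Field 𝕜] (a R w : 𝕜) : 𝕜 := w - a + R * (1 - a * w) * w ^ 2

section Quartic

variable {K x : ℝ}

lemma cassiniQuartic_eq_cube_mul (K x : ℝ) :
    cassiniQuartic K x = (3 * x + 1) ^ 3 * (x - 1) - 4 * (K - 2) * x := by
  unfold cassiniQuartic; ring

lemma cassiniQuartic_eq_mul_cassiniRatio (K : ℝ) (hx : x ≠ 0) :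
    cassiniQuartic K x = x * (cassiniRatio x - 4 * (K - 2)) := by
  rw [cassiniQuartic_eq_cube_mul, cassiniRatio]
  linear_combination (3 * x + 1) ^ 3 * mul_inv_cancel₀ hx

lemma cassiniQuartic_eq_zero_iff (hx : x ≠ 0) :
    cassiniQuartic K x = 0 ↔ cassiniRatio x = 4 * (K - 2) := by
  rw [cassiniQuartic_eq_mul_cassiniRatio K hx, mul_eq_zero, sub_eq_zero, or_iff_right hx]

lemma cassiniQuartic_root_mem (hK : 2 < K) (hx : cassiniQuartic K x = 0) :
    x ∈ Ioo (-(1 / 3)) 0 ∨ 1 < x := by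
  rw [cassiniQuartic_eq_cube_mul] at hx
  rcases le_or_gt x (-(1 / 3)) with hx₁ | hx₁
  · have : 0 ≤ (3 * x + 1) ^ 3 * (x - 1) :=
      mul_nonneg_of_nonpos_of_nonpos (Odd.pow_nonpos (by decide) (by linarith)) (by linarith)
    nlinarith
  rcases lt_or_ge x 0 with hx₂ | hx₂
  · exact Or.inl ⟨hx₁, hx₂⟩
  refine Or.inr (lt_of_not_ge fun hx₃ => ?_)
  rcases hx₂.lt_or_eq with hx₂ | rfl
  · have : (3 * x + 1) ^ 3 * (x - 1) ≤ 0 :=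
      mul_nonpos_of_nonneg_of_nonpos (by positivity) (by linarith)
    nlinarith [mul_pos (sub_pos.2 hK) hx₂]
  · norm_num at hx

lemma cassiniRatio_strictMonoOn {s : Set ℝ} (hpos : ∀ x ∈ s, 0 < 3 * x + 1 ∧ 0 < 1 - x⁻¹)
    (hsign : ∀ x ∈ s, ∀ y ∈ s, 0 < x * y) : StrictMonoOn cassiniRatio s := by
  intro x hx y hy hxy
  have hxy0 := hsign x hx y hy
  have hinv : y⁻¹ < x⁻¹ := by
    rw [← sub_pos, inv_sub_inv (left_ne_zero_of_mul hxy0.ne') (right_ne_zero_of_mul hxy0.ne')]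
    exact div_pos (sub_pos.2 hxy) hxy0
  exact mul_lt_mul'' (pow_lt_pow_left₀ (by linarith) (hpos x hx).1.le three_ne_zero)
    (by linarith) (pow_pos (hpos x hx).1 3).le (hpos x hx).2.le

lemma cassiniRatio_strictMonoOn_Ioo : StrictMonoOn cassiniRatio (Ioo (-(1 / 3)) 0) :=
  cassiniRatio_strictMonoOn
    (fun x hx => ⟨by linarith [hx.1], by linarith [inv_lt_zero.2 hx.2]⟩)
    (fun x hx y hy => mul_pos_of_neg_of_neg hx.2 hy.2)

lemma cassiniRatio_strictMonoOn_Ioi : StrictMonoOn cassiniRatio (Ioi 1) :=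
  cassiniRatio_strictMonoOn
    (fun x hx => ⟨by linarith [mem_Ioi.1 hx], sub_pos.2 (inv_lt_one_of_one_lt₀ hx)⟩)
    (fun x hx y hy => mul_pos (zero_lt_one.trans hx) (zero_lt_one.trans hy))

lemma continuous_cassiniQuartic (K : ℝ) : Continuous (cassiniQuartic K) := by
  unfold cassiniQuartic; fun_prop

lemma exists_cassiniQuartic_root_gt_one (hK : 2 < K) :
    ∃ x, 1 < x ∧ cassiniQuartic K x = 0 := by
  have hsign : 0 ∈ Ioo (cassiniQuartic K 1) (cassiniQuartic K K) := by
    have hcube : (3 * K) ^ 3 ≤ (3 * K + 1) ^ 3 := pow_le_pow_left₀ (by linarith) (by linarith) 3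
    simp only [mem_Ioo, cassiniQuartic_eq_cube_mul]
    constructor
    · linarith
    · nlinarith [mul_le_mul_of_nonneg_right hcube (by linarith : (0 : ℝ) ≤ K - 1)]
  obtain ⟨x, hx, hx0⟩ :=
    intermediate_value_Ioo (by linarith) (continuous_cassiniQuartic K).continuousOn hsign
  exact ⟨x, hx.1, hx0⟩

lemma exists_cassiniQuartic_root_mem_Ioo (hK : 2 < K) :
    ∃ x ∈ Ioo (-(1 / 3) : ℝ) 0, cassiniQuartic K x = 0 := by
  have hsign : 0 ∈ Ioo (cassiniQuartic K 0) (cassiniQuartic K (-(1 / 3))) := by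
    simp only [mem_Ioo, cassiniQuartic_eq_cube_mul]
    constructor <;> norm_num; linarith
  exact intermediate_value_Ioo' (by norm_num) (continuous_cassiniQuartic K).continuousOn hsign

theorem cassiniQuartic_roots (hK : 2 < K) :
    ∃ x₁ x₂ : ℝ, 1 < x₁ ∧ x₂ ∈ Ioo (-(1 / 3) : ℝ) 0 ∧ cassiniQuartic K x₁ = 0 ∧
      cassiniQuartic K x₂ = 0 ∧ ∀ x, cassiniQuartic K x = 0 → x = x₁ ∨ x = x₂ := by
  obtain ⟨x₁, hx₁, h₁⟩ := exists_cassiniQuartic_root_gt_one hK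
  obtain ⟨x₂, hx₂, h₂⟩ := exists_cassiniQuartic_root_mem_Ioo hK
  refine ⟨x₁, x₂, hx₁, hx₂, h₁, h₂, fun x hx => ?_⟩
  have hratio {y : ℝ} (hy : y ≠ 0) (h : cassiniQuartic K y = 0) :
      cassiniRatio y = 4 * (K - 2) :=
    (cassiniQuartic_eq_zero_iff hy).1 h
  rcases cassiniQuartic_root_mem hK hx with hneg | hpos
  · exact Or.inr <| cassiniRatio_strictMonoOn_Ioo.injOn hneg hx₂ <| by
      rw [hratio hneg.2.ne hx, hratio hx₂.2.ne h₂]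
  · exact Or.inl <| cassiniRatio_strictMonoOn_Ioi.injOn hpos hx₁ <| by
      rw [hratio (by linarith) hx, hratio (by linarith) h₁]

end Quartic

lemma two_lt_add_inv {R : ℝ} (hR0 : 0 < R) (hR1 : R < 1) : 2 < R + R⁻¹ := by
  have h : R + R⁻¹ - 2 = (1 - R) ^ 2 / R := by field_simp; ring
  have : 0 < (1 - R) ^ 2 / R := div_pos (pow_pos (sub_pos.2 hR1) 2) hR0
  linarith

lemma add_inv_sub_sqrt {x : ℝ} (hx : x ≤ -1) :
    ((x + x⁻¹) - Real.sqrt ((x + x⁻¹) ^ 2 - 4)) / 2 = x := by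
  have hx0 : x ≠ 0 := by linarith
  have hxx := mul_inv_cancel₀ hx0
  have hsq : (x + x⁻¹) ^ 2 - 4 = (x⁻¹ - x) ^ 2 := by linear_combination 4 * hxx
  have hle : x ≤ x⁻¹ := by nlinarith
  rw [hsq, Real.sqrt_sq (sub_nonneg.2 hle)]
  ring

section Cubic

variable {𝕜 : Type*} [Field 𝕜]

/-- `h₁` says that `b` is also a root of the derivative `1 + 2Rw - 3aRw²`. -/
lemma cassiniCubic_eq_of_double_root {a R b : 𝕜} (ha : a ≠ 0) (h₀ : cassiniCubic a R b = 0)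
    (h₁ : 1 + 2 * R * b - 3 * a * R * b ^ 2 = 0) (w : 𝕜) :
    cassiniCubic a R w = -a * R * (w - b) ^ 2 * (w - (a⁻¹ - 2 * b)) := by
  unfold cassiniCubic at *
  linear_combination h₀ + (w - b) * h₁ - R * (w - b) ^ 2 * mul_inv_cancel₀ ha

lemma cassiniCubic_inv {a R b : 𝕜} (hR : R ≠ 0) (hb : b ≠ 0) (h₀ : cassiniCubic a R b = 0) :
    cassiniCubic a R b⁻¹ = (a - b) * (R⁻¹ - R) / b ^ 3 := by
  unfold cassiniCubic at *
  field_simp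
  linear_combination h₀

end Cubic

section CassiniRoots

variable {R a : ℝ}

lemma bval_lt_neg_one (ha : a ∈ Ioo (-(1 / 3)) 0) : bval a < -1 := by
  have hs : (3 * a ^ 2 + 1) / (2 * a) < -2 := by
    rw [div_lt_iff_of_neg (by linarith [ha.2])]
    nlinarith [ha.1, ha.2]
  have := Real.sqrt_nonneg (((3 * a ^ 2 + 1) / (2 * a)) ^ 2 - 4)
  unfold bval
  linarith

lemma cval_eq (a : ℝ) : cval a = a⁻¹ - 2 * bval a := by
  unfold cval bval
  ring

lemma bval_eq (hR0 : 0 < R) (hR1 : R < 1) (ha : a ∈ Ioo (-(1 / 3)) 0)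
    (hq : cassiniQuartic (R + R⁻¹) a = 0) : bval a = -2 * (R⁻¹ + 3 * a) / (1 - 9 * a ^ 2) := by
  have hD : 0 < 1 - 9 * a ^ 2 := by nlinarith [ha.1, ha.2]
  have hRinv : 1 < R⁻¹ := (one_lt_inv₀ hR0).2 hR1
  have hle : -2 * (R⁻¹ + 3 * a) / (1 - 9 * a ^ 2) ≤ -1 := by
    rw [div_le_iff₀ hD]
    nlinarith [ha.1, ha.2]
  have hsum : (3 * a ^ 2 + 1) / (2 * a) =
      -2 * (R⁻¹ + 3 * a) / (1 - 9 * a ^ 2) + (-2 * (R⁻¹ + 3 * a) / (1 - 9 * a ^ 2))⁻¹ := by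
    have ha0 : a ≠ 0 := ha.2.ne
    have hq0 : R⁻¹ + 3 * a ≠ 0 := by linarith [ha.1]
    have hRS := mul_inv_cancel₀ hR0.ne'
    unfold cassiniQuartic at hq
    -- abstract `R⁻¹` and `1 - 9a²` so that `field_simp` clears exactly these denominators
    generalize R⁻¹ = S at *
    generalize hD_def : 1 - 9 * a ^ 2 = D at *
    rw [inv_div]
    field_simp
    subst hD_def
    linear_combination (-S) * hq - 4 * a * hRS
  unfold bval
  rw [hsum]
  exact add_inv_sub_sqrt hle

lemma cassiniCubic_bval_double_root (hR0 : 0 < R) (hR1 : R < 1) (ha : a ∈ Ioo (-(1 / 3)) 0)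
    (hq : cassiniQuartic (R + R⁻¹) a = 0) :
    cassiniCubic a R (bval a) = 0 ∧ 1 + 2 * R * bval a - 3 * a * R * bval a ^ 2 = 0 := by
  have hD : 1 - 9 * a ^ 2 ≠ 0 := by nlinarith [ha.1, ha.2]
  have hRS := mul_inv_cancel₀ hR0.ne'
  rw [bval_eq hR0 hR1 ha hq]
  unfold cassiniCubic
  unfold cassiniQuartic at hq
  generalize R⁻¹ = S at *
  generalize hD_def : 1 - 9 * a ^ 2 = D at *
  constructor
  · field_simp
    subst hD_def
    linear_combination (-2 * (S + 3 * a) - 3 * a * (1 - 9 * a ^ 2)) * hq +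
      (4 * (S + 3 * a) * (1 - 3 * a ^ 2 + 2 * a * (S + 3 * a)) + 4 * a * (1 - 9 * a ^ 2)) * hRS
  · field_simp
    subst hD_def
    linear_combination 3 * hq - (4 + 12 * a * (S + 3 * a)) * hRS

lemma lt_of_mul_sq_mul_sub_pos {k x b c : ℝ} (hk : 0 ≤ k) (h : 0 < k * (x - b) ^ 2 * (x - c)) :
    c < x := by
  by_contra! hle
  exact h.not_ge <|
    mul_nonpos_of_nonneg_of_nonpos (mul_nonneg hk (sq_nonneg _)) (sub_nonpos.2 hle)

lemma lt_of_mul_sq_mul_sub_neg {k x b c : ℝ} (hk : 0 ≤ k) (h : k * (x - b) ^ 2 * (x - c) < 0) :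
    x < c := by
  by_contra! hle
  exact h.not_ge (mul_nonneg (mul_nonneg hk (sq_nonneg _)) (sub_nonneg.2 hle))

lemma cassiniCubic_eq_bval_cval (hR0 : 0 < R) (hR1 : R < 1) (ha : a ∈ Ioo (-(1 / 3)) 0)
    (hq : cassiniQuartic (R + R⁻¹) a = 0) (w : ℝ) :
    cassiniCubic a R w = -a * R * (w - bval a) ^ 2 * (w - cval a) := by
  obtain ⟨h₀, h₁⟩ := cassiniCubic_bval_double_root hR0 hR1 ha hq
  rw [cval_eq]
  exact cassiniCubic_eq_of_double_root ha.2.ne h₀ h₁ w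

theorem cassiniCubic_ofReal_eq_bval_cval (hR0 : 0 < R) (hR1 : R < 1)
    (ha : a ∈ Ioo (-(1 / 3)) 0) (hq : cassiniQuartic (R + R⁻¹) a = 0) (w : ℂ) :
    cassiniCubic (a : ℂ) R w = -a * R * (w - bval a) ^ 2 * (w - cval a) := by
  obtain ⟨h₀, h₁⟩ := cassiniCubic_bval_double_root hR0 hR1 ha hq
  have h₀' : cassiniCubic (a : ℂ) R (bval a) = 0 := by
    unfold cassiniCubic at h₀ ⊢
    exact_mod_cast h₀
  have h₁' : 1 + 2 * (R : ℂ) * bval a - 3 * a * R * (bval a : ℂ) ^ 2 = 0 := by exact_mod_cast h₁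
  have hc : (cval a : ℂ) = (a : ℂ)⁻¹ - 2 * bval a := by push_cast [cval_eq]; rfl
  rw [hc]
  exact cassiniCubic_eq_of_double_root (by exact_mod_cast ha.2.ne) h₀' h₁' w

theorem neg_one_lt_inv_bval_lt_cval_lt (hR0 : 0 < R) (hR1 : R < 1) (ha : a ∈ Ioo (-(1 / 3)) 0)
    (hq : cassiniQuartic (R + R⁻¹) a = 0) :
    -1 < (bval a)⁻¹ ∧ (bval a)⁻¹ < cval a ∧ cval a < a := by
  obtain ⟨h₀, -⟩ := cassiniCubic_bval_double_root hR0 hR1 ha hq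
  have hb : bval a < -1 := bval_lt_neg_one ha
  have hk : 0 ≤ -a * R := mul_nonneg (neg_nonneg.2 ha.2.le) hR0.le
  have hfac := cassiniCubic_eq_bval_cval hR0 hR1 ha hq
  refine ⟨?_, ?_, ?_⟩
  · simpa using (inv_lt_inv_of_neg (by norm_num) (by linarith)).2 hb
  · refine lt_of_mul_sq_mul_sub_neg (b := bval a) hk ?_
    rw [← hfac, cassiniCubic_inv hR0.ne' (by linarith) h₀]
    exact div_neg_of_pos_of_neg
      (mul_pos (by linarith [ha.1]) (by linarith [(one_lt_inv₀ hR0).2 hR1]))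
      (Odd.pow_neg (by decide) (by linarith))
  · refine lt_of_mul_sq_mul_sub_pos (b := bval a) hk ?_
    have hPa : cassiniCubic a R a = R * (1 - a ^ 2) * a ^ 2 := by unfold cassiniCubic; ring
    rw [← hfac, hPa]
    exact mul_pos (mul_pos hR0 (by nlinarith [ha.1, ha.2])) (sq_pos_of_neg ha.2)

end CassiniRoots

/-- For `0 < R < 1` the quartic `27x⁴ − 18x² − 4(R+R⁻¹)x − 1` has exactly two real roots,
one positive and one in `(−1/3, 0)`; and for the root `a ∈ (−1/3, 0)` the identity
`w − a + R(1−aw)w² = −aR(w−b)²(w−c)` holds for all `w ∈ ℂ`, together with the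
inequalities `−1 < 1/b < c < a < 0`. -/
theorem statement13 (R : ℝ) (hR0 : 0 < R) (hR1 : R < 1) :
    (∃ x₁ x₂ : ℝ, x₁ ≠ x₂ ∧ 0 < x₁ ∧ x₂ ∈ Set.Ioo (-(1 / 3) : ℝ) 0 ∧
      27 * x₁ ^ 4 - 18 * x₁ ^ 2 - 4 * (R + R⁻¹) * x₁ - 1 = 0 ∧
      27 * x₂ ^ 4 - 18 * x₂ ^ 2 - 4 * (R + R⁻¹) * x₂ - 1 = 0 ∧
      ∀ x : ℝ, 27 * x ^ 4 - 18 * x ^ 2 - 4 * (R + R⁻¹) * x - 1 = 0 → x = x₁ ∨ x = x₂) ∧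
    ∀ a : ℝ, a ∈ Set.Ioo (-(1 / 3) : ℝ) 0 →
      27 * a ^ 4 - 18 * a ^ 2 - 4 * (R + R⁻¹) * a - 1 = 0 →
      (∀ w : ℂ,
        w - (a : ℂ) + (R : ℂ) * (1 - (a : ℂ) * w) * w ^ 2 =
          -(a : ℂ) * (R : ℂ) * (w - (bval a : ℂ)) ^ 2 * (w - (cval a : ℂ))) ∧
      -1 < (bval a)⁻¹ ∧ (bval a)⁻¹ < cval a ∧ cval a < a ∧ a < 0 := by
  obtain ⟨x₁, x₂, h₁, h₂, hx₁, hx₂, huniq⟩ := cassiniQuartic_roots (two_lt_add_inv hR0 hR1)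
  have hx₁0 : 0 < x₁ := zero_lt_one.trans h₁
  refine ⟨⟨x₁, x₂, (h₂.2.trans hx₁0).ne', hx₁0, h₂, hx₁, hx₂, huniq⟩, fun a ha hq => ?_⟩
  obtain ⟨hb, hbc, hca⟩ := neg_one_lt_inv_bval_lt_cval_lt hR0 hR1 ha hq
  exact ⟨cassiniCubic_ofReal_eq_bval_cval hR0 hR1 ha hq, hb, hbc, hca, ha.2⟩
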